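/- Let D : Matrix (Fin m) (Fin n) ℤ have all entries nonnegative, every column nonzero, and ker_ℤ(D) ≠ {0}. Then there exist natural numbers p, q, a matrix H : Matrix (Fin p) (Fin q) ℤ with all entries in {0, 1}, and vectors c_1, …, c_n : Fin q → ℤ with all entries in {0, 1}, with nonempty pairwise disjoint supports whose union is all of Fin q, such that the map φ(u) := Σ_i u_i • c_i satisfies: (i) φ restricts to a bijection from ker_ℤ(D) onto ker_ℤ(H); (ii) φ restricts to a bijection from the Graver basis Gr(D) onto Gr(H); (iii) φ restricts to a bijection from the set of circuits of D onto the set of circuits of H; (iv) for every nonzero u ∈ ker_ℤ(D), u admits a proper semiconformal decomposition in ker_ℤ(D) if and only if φ(u) admits one in ker_ℤ(H); (v) a finite subset M ⊆ ker_ℤ(D) is a Markov basis of D if and only if φ(M) is a Markov basis of H, and M is a minimal Markov basis of D if and only if φ(M) is a minimal Markov basis of H. -/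
import Mathlib
set_option maxHeartbeats 1000000


/-- The integer kernel of an integer matrix. -/
def kerZ {m n : ℕ} (A : Matrix (Fin m) (Fin n) ℤ) : Set (Fin n → ℤ) :=
  {u | A.mulVec u = 0}

/-- The componentwise positive part `u⁺` of an integer vector. -/
def posPartZ {n : ℕ} (u : Fin n → ℤ) : Fin n → ℤ := fun i => max (u i) 0

/-- The componentwise negative part `u⁻` of an integer vector. -/
def negPartZ {n : ℕ} (u : Fin n → ℤ) : Fin n → ℤ := fun i => max (-u i) 0

/-- `u = v + w` is a proper conformal decomposition within `kerZ A`. -/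
def IsProperConformalDecomp {m n : ℕ} (A : Matrix (Fin m) (Fin n) ℤ)
    (u v w : Fin n → ℤ) : Prop :=
  v ∈ kerZ A ∧ w ∈ kerZ A ∧ v ≠ 0 ∧ w ≠ 0 ∧ u = v + w ∧
    posPartZ u = posPartZ v + posPartZ w ∧ negPartZ u = negPartZ v + negPartZ w

/-- `u` belongs to the Graver basis of `A`: it is a nonzero element of the integer
kernel admitting no proper conformal decomposition. -/
def InGraver {m n : ℕ} (A : Matrix (Fin m) (Fin n) ℤ) (u : Fin n → ℤ) : Prop :=
  u ∈ kerZ A ∧ u ≠ 0 ∧ ¬ ∃ v w, IsProperConformalDecomp A u v w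

/-- `u = v + w` is a proper semiconformal decomposition within `kerZ A`. -/
def IsProperSemiconformalDecomp {m n : ℕ} (A : Matrix (Fin m) (Fin n) ℤ)
    (u v w : Fin n → ℤ) : Prop :=
  v ∈ kerZ A ∧ w ∈ kerZ A ∧ v ≠ 0 ∧ w ≠ 0 ∧ u = v + w ∧
    ∀ i, (0 < v i → 0 ≤ w i) ∧ (w i < 0 → v i ≤ 0)

/-- `u` is a circuit of `A`: a nonzero integer kernel element with coprime coordinates
whose support is minimal among supports of nonzero kernel elements. -/
def IsCircuit {m n : ℕ} (A : Matrix (Fin m) (Fin n) ℤ) (u : Fin n → ℤ) : Prop :=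
  u ∈ kerZ A ∧ u ≠ 0 ∧ Finset.univ.gcd u = 1 ∧
    ∀ v ∈ kerZ A, v ≠ 0 → Function.support v ⊆ Function.support u →
      Function.support v = Function.support u

/-- The map `φ(u) = Σ_i u_i • c_i`. -/
def phiMap {n q : ℕ} (c : Fin n → Fin q → ℤ) (u : Fin n → ℤ) : Fin q → ℤ :=
  ∑ i, u i • c i

/-- `M` is a Markov basis of `A`. -/
def IsMarkovBasis {m n : ℕ} (A : Matrix (Fin m) (Fin n) ℤ)
    (M : Finset (Fin n → ℤ)) : Prop :=
  (↑M ⊆ kerZ A) ∧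
  ∀ w v : Fin n → ℤ, (∀ j, 0 ≤ w j) → (∀ j, 0 ≤ v j) → w - v ∈ kerZ A →
    ∃ (r : ℕ) (u : Fin r → Fin n → ℤ), (∀ k, u k ∈ M) ∧
      w - v = ∑ k, u k ∧
      ∀ p : ℕ, 1 ≤ p → p ≤ r → ∀ j,
        0 ≤ w j - ∑ k ∈ Finset.univ.filter (fun k : Fin r => (k : ℕ) < p), u k j

/-- `M` is a minimal Markov basis of `A`: no proper subset of it is a Markov basis. -/
def IsMinimalMarkovBasis {m n : ℕ} (A : Matrix (Fin m) (Fin n) ℤ)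
    (M : Finset (Fin n → ℤ)) : Prop :=
  IsMarkovBasis A M ∧ ∀ M' ⊂ M, ¬ IsMarkovBasis A M'


section Transfer
variable {m n p q : ℕ} {β : Fin q → Fin n} {D : Matrix (Fin m) (Fin n) ℤ}
  {H : Matrix (Fin p) (Fin q) ℤ}

lemma comp_inj (hβ : Function.Surjective β) :
    Function.Injective (fun u : Fin n → ℤ => u ∘ β) := by
  intro u v h
  funext i
  obtain ⟨l, rfl⟩ := hβ i
  exact congrFun h l

lemma comp_add (u v : Fin n → ℤ) : (u + v) ∘ β = u ∘ β + v ∘ β := rfl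

lemma comp_ne (hβ : Function.Surjective β) {u : Fin n → ℤ} (hu : u ≠ 0) : u ∘ β ≠ 0 := by
  intro h
  exact hu (comp_inj hβ (by simpa using h))

lemma comp_gcd (hβ : Function.Surjective β) (u : Fin n → ℤ) :
    Finset.univ.gcd (u ∘ β) = Finset.univ.gcd u := by
  rw [← Finset.gcd_image (g := β) (f := u)]
  congr 1
  simpa using Finset.image_univ_of_surjective hβ

lemma comp_supp (u : Fin n → ℤ) : Function.support (u ∘ β) = β ⁻¹' Function.support u :=
  Function.support_comp_eq_preimage u β

lemma preimage_inj (hβ : Function.Surjective β) {S T : Set (Fin n)}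
    (h : β ⁻¹' S = β ⁻¹' T) : S = T := by
  ext x
  obtain ⟨l, rfl⟩ := hβ x
  exact ⟨fun hx => (Set.ext_iff.1 h l).1 hx, fun hx => (Set.ext_iff.1 h l).2 hx⟩

lemma pos_comp (u : Fin n → ℤ) : posPartZ (u ∘ β) = posPartZ u ∘ β := rfl
lemma neg_comp (u : Fin n → ℤ) : negPartZ (u ∘ β) = negPartZ u ∘ β := rfl

lemma transfer_conformal (hβ : Function.Surjective β)
    (hk : kerZ H = (fun u : Fin n → ℤ => u ∘ β) '' kerZ D) (u : Fin n → ℤ) :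
    (∃ v w, IsProperConformalDecomp D u v w) ↔
      ∃ v w, IsProperConformalDecomp H (u ∘ β) v w := by
  constructor
  · rintro ⟨v, w, hv, hw, hv0, hw0, rfl, hp, hn⟩
    exact ⟨v ∘ β, w ∘ β, hk ▸ ⟨v, hv, rfl⟩, hk ▸ ⟨w, hw, rfl⟩, comp_ne hβ hv0,
      comp_ne hβ hw0, rfl, by rw [pos_comp, hp]; rfl, by rw [neg_comp, hn]; rfl⟩
  · rintro ⟨v, w, hv, hw, hv0, hw0, hsum, hp, hn⟩
    rw [hk] at hv hw
    obtain ⟨v', hv', rfl⟩ := hv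
    obtain ⟨w', hw', rfl⟩ := hw
    refine ⟨v', w', hv', hw', fun h => hv0 (by rw [h]; rfl),
      fun h => hw0 (by rw [h]; rfl), comp_inj hβ hsum, comp_inj hβ ?_, comp_inj hβ ?_⟩
    · exact hp
    · exact hn

lemma transfer_graver (hβ : Function.Surjective β)
    (hk : kerZ H = (fun u : Fin n → ℤ => u ∘ β) '' kerZ D) :
    Set.BijOn (fun u : Fin n → ℤ => u ∘ β) {u | InGraver D u} {z | InGraver H z} := by
  refine ⟨fun u hu => ?_, (comp_inj hβ).injOn, fun z hz => ?_⟩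
  · obtain ⟨hu1, hu2, hu3⟩ := hu
    exact ⟨hk ▸ ⟨u, hu1, rfl⟩, comp_ne hβ hu2,
      fun h => hu3 ((transfer_conformal hβ hk u).2 h)⟩
  · obtain ⟨hz1, hz2, hz3⟩ := hz
    rw [hk] at hz1
    obtain ⟨u, hu, rfl⟩ := hz1
    exact ⟨u, ⟨hu, fun h => hz2 (by rw [h]; rfl),
      fun h => hz3 ((transfer_conformal hβ hk u).1 h)⟩, rfl⟩

lemma transfer_circuit (hβ : Function.Surjective β)
    (hk : kerZ H = (fun u : Fin n → ℤ => u ∘ β) '' kerZ D) :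
    Set.BijOn (fun u : Fin n → ℤ => u ∘ β) {u | IsCircuit D u} {z | IsCircuit H z} := by
  have hsupp : ∀ u : Fin n → ℤ, Function.support (u ∘ β) = β ⁻¹' Function.support u :=
    fun u => Function.support_comp_eq_preimage u β
  refine ⟨fun u hu => ?_, (comp_inj hβ).injOn, fun z hz => ?_⟩
  · obtain ⟨hu1, hu2, hu3, hu4⟩ := hu
    refine ⟨hk ▸ ⟨u, hu1, rfl⟩, comp_ne hβ hu2, (comp_gcd hβ u).trans hu3, ?_⟩
    intro v hv hv0 hvs
    rw [hk] at hv
    obtain ⟨v', hv', rfl⟩ := hv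
    rw [hsupp, hsupp] at hvs ⊢
    rw [hu4 v' hv' (fun h => hv0 (by rw [h]; rfl))
      (fun x hx => by obtain ⟨l, rfl⟩ := hβ x; exact hvs hx)]
  · obtain ⟨hz1, hz2, hz3, hz4⟩ := hz
    rw [hk] at hz1
    obtain ⟨u, hu, rfl⟩ := hz1
    refine ⟨u, ⟨hu, fun h => hz2 (by rw [h]; rfl), (comp_gcd hβ u).symm.trans hz3, ?_⟩, rfl⟩
    intro v hv hv0 hvs
    have := hz4 (v ∘ β) (hk ▸ ⟨v, hv, rfl⟩) (comp_ne hβ hv0)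
      (by rw [hsupp, hsupp]; exact fun l hl => hvs hl)
    rw [hsupp, hsupp] at this
    exact preimage_inj hβ this

lemma transfer_semiconf (hβ : Function.Surjective β)
    (hk : kerZ H = (fun u : Fin n → ℤ => u ∘ β) '' kerZ D) (u : Fin n → ℤ) :
    (∃ v w, IsProperSemiconformalDecomp D u v w) ↔
      ∃ v w, IsProperSemiconformalDecomp H (u ∘ β) v w := by
  constructor
  · rintro ⟨v, w, hv, hw, hv0, hw0, rfl, hs⟩
    exact ⟨v ∘ β, w ∘ β, hk ▸ ⟨v, hv, rfl⟩, hk ▸ ⟨w, hw, rfl⟩, comp_ne hβ hv0,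
      comp_ne hβ hw0, rfl, fun l => hs (β l)⟩
  · rintro ⟨v, w, hv, hw, hv0, hw0, hsum, hs⟩
    rw [hk] at hv hw
    obtain ⟨v', hv', rfl⟩ := hv
    obtain ⟨w', hw', rfl⟩ := hw
    refine ⟨v', w', hv', hw', fun h => hv0 (by rw [h]; rfl),
      fun h => hw0 (by rw [h]; rfl), comp_inj hβ hsum, fun i => ?_⟩
    obtain ⟨l, rfl⟩ := hβ i
    exact hs l

lemma transfer_markov (hβ : Function.Surjective β)
    (hk : kerZ H = (fun u : Fin n → ℤ => u ∘ β) '' kerZ D)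
    (M : Finset (Fin n → ℤ)) (hM : ↑M ⊆ kerZ D) :
    IsMarkovBasis D M ↔ IsMarkovBasis H (M.image (fun u => u ∘ β)) := by
  classical
  constructor
  · rintro ⟨-, hMark⟩
    refine ⟨?_, ?_⟩
    · intro z hz
      obtain ⟨u, hu, rfl⟩ := Finset.mem_image.1 (by exact_mod_cast hz)
      exact hk ▸ ⟨u, hM hu, rfl⟩
    · intro w v hw hv hwv
      rw [hk] at hwv
      obtain ⟨d, hd, hφd⟩ := hwv
      -- fibers of β are nonempty
      have hfib : ∀ j, (Finset.univ.filter fun l => β l = j).Nonempty := by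
        intro j
        obtain ⟨l, hl⟩ := hβ j
        exact ⟨l, Finset.mem_filter.2 ⟨Finset.mem_univ l, hl⟩⟩
      set W : Fin n → ℤ := fun j => (Finset.univ.filter fun l => β l = j).inf' (hfib j) w
        with hWdef
      set V : Fin n → ℤ := W - d with hVdef
      have hd_eval : ∀ l, d (β l) = w l - v l := by
        intro l
        have h := congrFun hφd l
        simpa using h
      have hWle : ∀ l, W (β l) ≤ w l := by
        intro l
        apply Finset.inf'_le w
        exact Finset.mem_filter.2 ⟨Finset.mem_univ l, rfl⟩
      have hW0 : ∀ j, 0 ≤ W j := fun j =>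
        Finset.le_inf' _ _ (fun l _ => hw l)
      have hV0 : ∀ j, 0 ≤ V j := by
        intro j
        obtain ⟨l, hl, hWl⟩ := Finset.exists_mem_eq_inf' (hfib j) w
        have hβl : β l = j := (Finset.mem_filter.1 hl).2
        have hWj : W j = w l := hWl
        have hd' : d j = w l - v l := by rw [← hβl]; exact hd_eval l
        have : V j = v l := by
          simp only [hVdef, Pi.sub_apply, hWj, hd']
          ring
        rw [this]; exact hv l
      have hWV : W - V ∈ kerZ D := by
        have : W - V = d := by simp [hVdef]
        rw [this]; exact hd
      obtain ⟨r, u, huM, husum, hupart⟩ := hMark W V hW0 hV0 hWV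
      refine ⟨r, fun k => (u k) ∘ β, fun k => Finset.mem_image.2 ⟨u k, huM k, rfl⟩, ?_, ?_⟩
      · funext l
        have h1 : (W - V) (β l) = (∑ k, u k) (β l) := congrFun husum (β l)
        have h2 : (W - V) (β l) = d (β l) := by simp [hVdef]
        simp only [Finset.sum_apply] at h1 ⊢
        calc (w - v) l = d (β l) := (hd_eval l).symm
          _ = ∑ k, u k (β l) := h2.symm.trans h1
      · intro pp hp1 hpr l
        have := hupart pp hp1 hpr (β l)
        have hsum_eq : ∑ k ∈ Finset.univ.filter (fun k : Fin r => (k : ℕ) < pp),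
            (fun kk => (u kk) ∘ β) k l
            = ∑ k ∈ Finset.univ.filter (fun k : Fin r => (k : ℕ) < pp), u k (β l) := rfl
        rw [hsum_eq]
        have := hupart pp hp1 hpr (β l)
        linarith [hWle l]
  · rintro ⟨-, hMark⟩
    refine ⟨hM, ?_⟩
    intro w v hw hv hwv
    obtain ⟨r, z, hzM, hzsum, hzpart⟩ := hMark (w ∘ β) (v ∘ β)
      (fun l => hw (β l)) (fun l => hv (β l)) (hk ▸ ⟨w - v, hwv, rfl⟩)
    have hchoose : ∀ k, ∃ u ∈ M, u ∘ β = z k := by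
      intro k
      obtain ⟨u, hu, he⟩ := Finset.mem_image.1 (hzM k)
      exact ⟨u, hu, he⟩
    choose u huM huβ using hchoose
    have hzeval : ∀ k l, z k l = u k (β l) := fun k l => (congrFun (huβ k) l).symm
    refine ⟨r, u, huM, ?_, ?_⟩
    · apply comp_inj hβ
      funext l
      have := congrFun hzsum l
      simp only [Pi.sub_apply, Finset.sum_apply, Function.comp_apply] at this ⊢
      rw [this]
      exact Finset.sum_congr rfl fun k _ => hzeval k l
    · intro pp hp1 hpr j
      obtain ⟨l, hl⟩ := hβ j
      have := hzpart pp hp1 hpr l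
      have hse : ∑ k ∈ Finset.univ.filter (fun k : Fin r => (k : ℕ) < pp), z k l
          = ∑ k ∈ Finset.univ.filter (fun k : Fin r => (k : ℕ) < pp), u k j := by
        refine Finset.sum_congr rfl fun k _ => ?_
        rw [hzeval k l, hl]
      rw [hse] at this
      simpa [hl] using this

lemma transfer_min_markov (hβ : Function.Surjective β)
    (hk : kerZ H = (fun u : Fin n → ℤ => u ∘ β) '' kerZ D)
    (M : Finset (Fin n → ℤ)) (hM : ↑M ⊆ kerZ D) :
    IsMinimalMarkovBasis D M ↔ IsMinimalMarkovBasis H (M.image (fun u => u ∘ β)) := by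
  classical
  constructor
  · rintro ⟨hMk, hmin⟩
    refine ⟨(transfer_markov hβ hk M hM).1 hMk, ?_⟩
    intro N hN hNMark
    set M' : Finset (Fin n → ℤ) := M.filter (fun u => u ∘ β ∈ N) with hM'def
    have hM'sub : M' ⊆ M := Finset.filter_subset _ _
    have himg : M'.image (fun u => u ∘ β) = N := by
      ext z
      simp only [Finset.mem_image, hM'def, Finset.mem_filter]
      constructor
      · rintro ⟨u, ⟨-, hu2⟩, rfl⟩; exact hu2
      · intro hz
        obtain ⟨u, hu, rfl⟩ := Finset.mem_image.1 (hN.1 hz)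
        exact ⟨u, ⟨hu, hz⟩, rfl⟩
    have hM'ss : M' ⊂ M := by
      refine ⟨hM'sub, fun hle => ?_⟩
      have : M' = M := le_antisymm hM'sub hle
      rw [← himg, this] at hN
      exact hN.2 le_rfl
    exact hmin M' hM'ss ((transfer_markov hβ hk M' (fun u hu => hM (hM'sub hu))).2
      (himg ▸ hNMark))
  · rintro ⟨hMk, hmin⟩
    refine ⟨(transfer_markov hβ hk M hM).2 hMk, ?_⟩
    intro M' hM' hM'Mark
    have hM'sub : ↑M' ⊆ kerZ D := fun u hu => hM (hM'.1 hu)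
    refine hmin (M'.image (fun u => u ∘ β)) ?_ ((transfer_markov hβ hk M' hM'sub).1 hM'Mark)
    exact Finset.image_ssubset_image (comp_inj hβ) |>.2 hM'

end Transfer

namespace HypEnc
variable {m n : ℕ} (D : Matrix (Fin m) (Fin n) ℤ)

/-- block sizes -/
def t (j : Fin n) : ℕ := (Finset.univ.sup fun i => (D i j).toNat) + 1

lemma t_pos (j : Fin n) : 0 < t D j := Nat.succ_pos _

lemma toNat_lt_t (i : Fin m) (j : Fin n) : (D i j).toNat < t D j :=
  Nat.lt_succ_of_le (Finset.le_sup (f := fun i => (D i j).toNat) (Finset.mem_univ i))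

/-- index type of expanded coordinates -/
abbrev I := (j : Fin n) × Fin (t D j)

def k0 (j : Fin n) : Fin (t D j) := ⟨0, t_pos D j⟩

noncomputable def e : I D ≃ Fin (Fintype.card (I D)) := Fintype.equivFin _

/-- admissible rows -/
def P (ir : Fin m × (I D → Bool)) : Prop :=
  ∀ j, (Finset.univ.filter fun k => ir.2 ⟨j, k⟩ = true).card = (D ir.1 j).toNat

instance : DecidablePred (P D) := fun _ => by unfold P; infer_instance

abbrev RT := {ir : Fin m × (I D → Bool) // P D ir}

noncomputable def eR : RT D ≃ Fin (Fintype.card (RT D)) := Fintype.equivFin _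

noncomputable def β : Fin (Fintype.card (I D)) → Fin n := fun l => ((e D).symm l).1

lemma β_surj : Function.Surjective (β D) := fun j =>
  ⟨e D ⟨j, k0 D j⟩, by simp [β]⟩

noncomputable def Hmat : Matrix (Fin (Fintype.card (RT D))) (Fin (Fintype.card (I D))) ℤ :=
  fun a l => if ((eR D).symm a).1.2 ((e D).symm l) then 1 else 0

/-- dot product of a boolean row with a vector over `I D` -/
def rowsum (r : I D → Bool) (y : I D → ℤ) : ℤ :=
  ∑ i : I D, (if r i then 1 else 0) * y i

lemma rowsum_blocks (r : I D → Bool) (y : I D → ℤ) :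
    rowsum D r y = ∑ j, ∑ k : Fin (t D j), (if r ⟨j, k⟩ then 1 else 0) * y ⟨j, k⟩ := by
  rw [rowsum, ← Finset.univ_sigma_univ, Finset.sum_sigma]

lemma mulVec_Hmat (x : Fin (Fintype.card (I D)) → ℤ) (a : Fin (Fintype.card (RT D))) :
    (Hmat D).mulVec x a = rowsum D ((eR D).symm a).1.2 (fun i => x (e D i)) := by
  rw [rowsum, ← Equiv.sum_comp (e D).symm
    (fun i => (if ((eR D).symm a).1.2 i then (1:ℤ) else 0) * x (e D i))]
  simp [Matrix.mulVec, dotProduct, Hmat]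

lemma mem_ker_iff (x : Fin (Fintype.card (I D)) → ℤ) :
    x ∈ kerZ (Hmat D) ↔ ∀ rt : RT D, rowsum D rt.1.2 (fun i => x (e D i)) = 0 := by
  constructor
  · intro hx rt
    have := congrFun hx (eR D rt)
    rw [mulVec_Hmat] at this
    simpa using this
  · intro h
    funext a
    rw [mulVec_Hmat]
    simpa using h ((eR D).symm a)

/-- the indicator row of a family of sets -/
def rowOf (S : ∀ j, Finset (Fin (t D j))) : I D → Bool := fun a => decide (a.2 ∈ S a.1)

lemma rowOf_mem (i : Fin m) (S : ∀ j, Finset (Fin (t D j)))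
    (hS : ∀ j, (S j).card = (D i j).toNat) : P D (i, rowOf D S) := by
  intro j
  have h1 : (Finset.univ.filter fun k => rowOf D S ⟨j, k⟩ = true) = S j := by
    ext k; simp [rowOf]
  rw [h1, hS j]

lemma rowsum_rowOf (S : ∀ j, Finset (Fin (t D j))) (y : I D → ℤ) :
    rowsum D (rowOf D S) y = ∑ j, ∑ k ∈ S j, y ⟨j, k⟩ := by
  rw [rowsum_blocks]
  refine Finset.sum_congr rfl fun j _ => ?_
  simp [rowOf, ite_mul, Finset.sum_ite_mem]

/-- an explicit family of sets of prescribed sizes -/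
def Bfam (i : Fin m) (j : Fin n) : Finset (Fin (t D j)) :=
  (Finset.univ : Finset (Fin ((D i j).toNat))).map
    (Fin.castLEEmb (le_of_lt (toNat_lt_t D i j)))

lemma Bfam_card (i : Fin m) (j : Fin n) : (Bfam D i j).card = (D i j).toNat := by
  simp [Bfam]


lemma rowsum_eq_of_sets (x : Fin (Fintype.card (I D)) → ℤ) (hx : x ∈ kerZ (Hmat D))
    (i : Fin m) (S : ∀ j, Finset (Fin (t D j))) (hS : ∀ j, (S j).card = (D i j).toNat) :
    ∑ j, ∑ k ∈ S j, x (e D ⟨j, k⟩) = 0 := by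
  have h := (mem_ker_iff D x).1 hx ⟨(i, rowOf D S), rowOf_mem D i S hS⟩
  rwa [rowsum_rowOf] at h

lemma const_on_blocks (hDnonneg : ∀ i j, 0 ≤ D i j) (hDcol : ∀ j, ∃ i, D i j ≠ 0)
    (x : Fin (Fintype.card (I D)) → ℤ) (hx : x ∈ kerZ (Hmat D))
    (j : Fin n) (k : Fin (t D j)) :
    x (e D ⟨j, k⟩) = x (e D ⟨j, k0 D j⟩) := by
  classical
  by_cases hk : k = k0 D j
  · rw [hk]
  obtain ⟨i, hi⟩ := hDcol j
  have hd1 : 1 ≤ (D i j).toNat := by have := hDnonneg i j; omega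
  have hdt : (D i j).toNat < t D j := toNat_lt_t D i j
  have hpair : ({k0 D j, k} : Finset (Fin (t D j))).card = 2 := by
    rw [Finset.card_insert_of_notMem (by simpa using fun h => hk h.symm), Finset.card_singleton]
  have hcard : (D i j).toNat - 1 ≤
      ((Finset.univ : Finset (Fin (t D j))) \ {k0 D j, k}).card := by
    rw [Finset.card_sdiff_of_subset (Finset.subset_univ _), hpair, Finset.card_univ, Fintype.card_fin]
    omega
  obtain ⟨A, hA, hAcard⟩ := Finset.exists_subset_card_eq hcard
  have hk0A : k0 D j ∉ A := fun h => by simpa using hA h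
  have hkA : k ∉ A := fun h => by simpa using hA h
  set S1 := Function.update (Bfam D i) j (insert (k0 D j) A) with hS1def
  set S2 := Function.update (Bfam D i) j (insert k A) with hS2def
  have hS1 : ∀ j', (S1 j').card = (D i j').toNat := by
    intro j'
    by_cases h : j' = j
    · subst h
      rw [hS1def, Function.update_self, Finset.card_insert_of_notMem hk0A, hAcard]
      omega
    · rw [hS1def, Function.update_of_ne h, Bfam_card]
  have hS2 : ∀ j', (S2 j').card = (D i j').toNat := by
    intro j'
    by_cases h : j' = j
    · subst h
      rw [hS2def, Function.update_self, Finset.card_insert_of_notMem hkA, hAcard]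
      omega
    · rw [hS2def, Function.update_of_ne h, Bfam_card]
  have E1 := rowsum_eq_of_sets D x hx i S1 hS1
  have E2 := rowsum_eq_of_sets D x hx i S2 hS2
  have h1 : (∑ k' ∈ S1 j, x (e D ⟨j, k'⟩)) +
      ∑ j' ∈ Finset.univ.erase j, (∑ k' ∈ S1 j', x (e D ⟨j', k'⟩)) = 0 := by
    exact (Finset.add_sum_erase Finset.univ
      (fun j' => ∑ k' ∈ S1 j', x (e D ⟨j', k'⟩)) (Finset.mem_univ j)).trans E1
  have h2 : (∑ k' ∈ S2 j, x (e D ⟨j, k'⟩)) +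
      ∑ j' ∈ Finset.univ.erase j, (∑ k' ∈ S2 j', x (e D ⟨j', k'⟩)) = 0 := by
    exact (Finset.add_sum_erase Finset.univ
      (fun j' => ∑ k' ∈ S2 j', x (e D ⟨j', k'⟩)) (Finset.mem_univ j)).trans E2
  have herase : ∑ j' ∈ Finset.univ.erase j, (∑ k' ∈ S1 j', x (e D ⟨j', k'⟩)) =
      ∑ j' ∈ Finset.univ.erase j, (∑ k' ∈ S2 j', x (e D ⟨j', k'⟩)) := by
    refine Finset.sum_congr rfl fun j' hj' => ?_
    rw [hS1def, hS2def, Function.update_of_ne (Finset.ne_of_mem_erase hj'),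
      Function.update_of_ne (Finset.ne_of_mem_erase hj')]
  have hSj : ∑ k' ∈ S1 j, x (e D ⟨j, k'⟩) = ∑ k' ∈ S2 j, x (e D ⟨j, k'⟩) := by
    linarith [h1, h2, herase]
  rw [hS1def, hS2def, Function.update_self, Function.update_self,
    Finset.sum_insert hk0A, Finset.sum_insert hkA] at hSj
  linarith

lemma ker_eq (hDnonneg : ∀ i j, 0 ≤ D i j) (hDcol : ∀ j, ∃ i, D i j ≠ 0) :
    kerZ (Hmat D) = (fun u : Fin n → ℤ => u ∘ β D) '' kerZ D := by
  apply Set.Subset.antisymm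
  · intro x hx
    refine ⟨fun j => x (e D ⟨j, k0 D j⟩), ?_, ?_⟩
    · show Matrix.mulVec D _ = 0
      funext i
      have E := rowsum_eq_of_sets D x hx i (Bfam D i) (Bfam_card D i)
      have hblk : ∀ j, ∑ k ∈ Bfam D i j, x (e D ⟨j, k⟩) = D i j * x (e D ⟨j, k0 D j⟩) := by
        intro j
        rw [Finset.sum_congr rfl (fun k _ => const_on_blocks D hDnonneg hDcol x hx j k),
          Finset.sum_const, Bfam_card, nsmul_eq_mul]
        congr 1
        exact_mod_cast Int.toNat_of_nonneg (hDnonneg i j)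
      simp only [Matrix.mulVec, dotProduct, Pi.zero_apply]
      rw [← E]
      exact Finset.sum_congr rfl fun j _ => (hblk j).symm
    · funext l
      have h := const_on_blocks D hDnonneg hDcol x hx ((e D).symm l).1 ((e D).symm l).2
      have h2 : (⟨((e D).symm l).1, ((e D).symm l).2⟩ : I D) = (e D).symm l := rfl
      rw [h2, Equiv.apply_symm_apply] at h
      exact h.symm
  · rintro x ⟨u, hu, rfl⟩
    rw [mem_ker_iff]
    intro rt
    have heval : (fun i : I D => (u ∘ β D) (e D i)) = fun i => u i.1 := by
      funext i; simp [β]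
    rw [heval, rowsum_blocks]
    have hrow : ∀ j, ∑ k : Fin (t D j),
        (if rt.1.2 ⟨j, k⟩ then (1:ℤ) else 0) * u j = D rt.1.1 j * u j := by
      intro j
      rw [← Finset.sum_mul, Finset.sum_boole, rt.2 j]
      congr 1
      exact Int.toNat_of_nonneg (hDnonneg _ j)
    rw [Finset.sum_congr rfl fun j _ => hrow j]
    have := congrFun hu rt.1.1
    simpa [Matrix.mulVec, dotProduct] using this

end HypEnc

theorem hypergraph_encoding_of_positively_graded_matrix {m n : ℕ}
    (D : Matrix (Fin m) (Fin n) ℤ)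
    (hDnonneg : ∀ i j, 0 ≤ D i j)
    (hDcol : ∀ j, ∃ i, D i j ≠ 0)
    (hker : ∃ u ∈ kerZ D, u ≠ 0) :
    ∃ (p q : ℕ) (H : Matrix (Fin p) (Fin q) ℤ) (c : Fin n → Fin q → ℤ),
      (∀ i j, H i j = 0 ∨ H i j = 1) ∧
      (∀ i j, c i j = 0 ∨ c i j = 1) ∧
      (∀ i, (Function.support (c i)).Nonempty) ∧
      (∀ i i', i ≠ i' → Disjoint (Function.support (c i)) (Function.support (c i'))) ∧
      (∀ j : Fin q, ∃ i, c i j ≠ 0) ∧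
      Set.BijOn (phiMap c) (kerZ D) (kerZ H) ∧
      Set.BijOn (phiMap c) {u : Fin n → ℤ | InGraver D u} {z : Fin q → ℤ | InGraver H z} ∧
      Set.BijOn (phiMap c) {u : Fin n → ℤ | IsCircuit D u} {z : Fin q → ℤ | IsCircuit H z} ∧
      (∀ u ∈ kerZ D, u ≠ 0 →
        ((∃ v w, IsProperSemiconformalDecomp D u v w) ↔
          (∃ v w, IsProperSemiconformalDecomp H (phiMap c u) v w))) ∧
      (∀ M : Finset (Fin n → ℤ), ↑M ⊆ kerZ D →
        ((IsMarkovBasis D M ↔ IsMarkovBasis H (M.image (phiMap c))) ∧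
          (IsMinimalMarkovBasis D M ↔ IsMinimalMarkovBasis H (M.image (phiMap c))))) := by
  classical
  have hβs := HypEnc.β_surj D
  have hkeq := HypEnc.ker_eq D hDnonneg hDcol
  set c : Fin n → Fin (Fintype.card (HypEnc.I D)) → ℤ :=
    fun i l => if HypEnc.β D l = i then 1 else 0 with hcdef
  have hφ : phiMap c = fun u => u ∘ HypEnc.β D := by
    funext u l
    simp only [phiMap, Finset.sum_apply, Pi.smul_apply, smul_eq_mul, hcdef,
      mul_ite, mul_one, mul_zero, Function.comp_apply]
    rw [Finset.sum_ite_eq]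
    simp
  refine ⟨Fintype.card (HypEnc.RT D), Fintype.card (HypEnc.I D), HypEnc.Hmat D, c,
    ?_, ?_, ?_, ?_, ?_, ?_, ?_, ?_, ?_, ?_⟩
  · intro a l
    unfold HypEnc.Hmat
    split <;> simp
  · intro i l
    simp only [hcdef]
    split <;> simp
  · intro i
    refine ⟨HypEnc.e D ⟨i, HypEnc.k0 D i⟩, ?_⟩
    simp [hcdef, Function.mem_support, HypEnc.β]
  · intro i i' hii'
    rw [Set.disjoint_left]
    intro l hl hl'
    simp only [Function.mem_support, hcdef, ne_eq, ite_eq_right_iff, one_ne_zero,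
      imp_false, not_not] at hl hl'
    exact hii' (hl.symm.trans hl')
  · intro l
    exact ⟨HypEnc.β D l, by simp [hcdef]⟩
  · rw [hφ]
    exact ⟨fun u hu => hkeq ▸ ⟨u, hu, rfl⟩, (comp_inj hβs).injOn, hkeq.le⟩
  · rw [hφ]
    exact transfer_graver hβs hkeq
  · rw [hφ]
    exact transfer_circuit hβs hkeq
  · intro u hu hu0
    rw [hφ]
    exact transfer_semiconf hβs hkeq u
  · intro M hM
    rw [hφ]
    exact ⟨transfer_markov hβs hkeq M hM, transfer_min_markov hβs hkeq M hM⟩
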